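/- Let (A, Δ_A) be an anti-flexible coalgebra, E a vector space containing A as a subspace, and V a complement of A in E, so E = A⊕V. Let CExtd(E,A) denote the set of equivalence classes of anti-flexible coalgebra structures on E such that the canonical injection i: A→E or the canonical projection p: E→A (with respect to E = A⊕V) is a coalgebra homomorphism, where two structures are equivalent if there is a coalgebra isomorphism between them whose restriction to A is the identity. Let HC(V,A) be the disjoint union of the set of type (c1) coalgebraic extending data and the set of type (c2) coalgebraic extending data of A through V, modulo the equivalence under which two data are identified exactly when there exist linear maps r: V→A and s: V→V with s bijective such that (a,x) ↦ (a + r(x), s(x)) is a coalgebra isomorphism between the corresponding unified coproducts. Then the map Ψ: HC(V,A) → CExtd(E,A) sending the class of a type (c1) datum to the class of A^P # V and the class of a type (c2) datum to the class of A #^Q V is well defined and bijective. -/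
import Mathlib


open TensorProduct LinearMap

namespace AntiFlexible

section Basic

variable (K : Type*) [Field K] [CharZero K]
variable (M N P : Type*)
variable [AddCommGroup M] [Module K M] [AddCommGroup N] [Module K N] [AddCommGroup P] [Module K P]

/-- The flip map `τ : M ⊗ N → N ⊗ M`. -/
noncomputable def τ : M ⊗[K] N →ₗ[K] N ⊗[K] M := (TensorProduct.comm K M N).toLinearMap

/-- `τ₁₃ : (M ⊗ N) ⊗ P → (P ⊗ N) ⊗ M`, exchanging the outer tensor factors. -/
noncomputable def τ₁₃ : (M ⊗[K] N) ⊗[K] P →ₗ[K] (P ⊗[K] N) ⊗[K] M :=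
  (TensorProduct.assoc K P N M).symm.toLinearMap ∘ₗ
    (lTensor P (τ K M N)) ∘ₗ (TensorProduct.comm K (M ⊗[K] N) P).toLinearMap

/-- The reassociator `M ⊗ (N ⊗ P) → (M ⊗ N) ⊗ P`. -/
noncomputable def α : M ⊗[K] (N ⊗[K] P) →ₗ[K] (M ⊗[K] N) ⊗[K] P :=
  (TensorProduct.assoc K M N P).symm.toLinearMap

/-- The antisymmetrizer `id - τ` on `M ⊗ M`. -/
noncomputable def ω : M ⊗[K] M →ₗ[K] M ⊗[K] M := LinearMap.id - τ K M M

end Basic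

section Structures

variable {K : Type*} [Field K] [CharZero K]
variable {A H V : Type*}
variable [AddCommGroup A] [Module K A] [AddCommGroup H] [Module K H]
variable [AddCommGroup V] [Module K V]

/-- Anti-flexible algebra: `(ab)c - a(bc) = (cb)a - c(ba)`. -/
def IsAFAlgebra (m : A →ₗ[K] A →ₗ[K] A) : Prop :=
  ∀ a b c, m (m a b) c - m a (m b c) = m (m c b) a - m c (m b a)

/-- The coassociativity defect `(Δ ⊗ id)Δ - (id ⊗ Δ)Δ`, viewed in `(A ⊗ A) ⊗ A`. -/
noncomputable def coassocDefect (Δ : A →ₗ[K] A ⊗[K] A) : A →ₗ[K] (A ⊗[K] A) ⊗[K] A :=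
  (rTensor A Δ) ∘ₗ Δ - (α K A A A) ∘ₗ (lTensor A Δ) ∘ₗ Δ

/-- Anti-flexible coalgebra: the coassociativity defect is `τ₁₃`-invariant. -/
def IsAFCoalgebra (Δ : A →ₗ[K] A ⊗[K] A) : Prop :=
  ∀ a, coassocDefect Δ a = τ₁₃ K A A A (coassocDefect Δ a)

/-- Anti-flexible bialgebra. -/
def IsAFBialgebra (m : A →ₗ[K] A →ₗ[K] A) (Δ : A →ₗ[K] A ⊗[K] A) : Prop :=
  IsAFAlgebra m ∧ IsAFCoalgebra Δ ∧
  (∀ a b, Δ (m a b) + τ K A A (Δ (m b a)) =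
      rTensor A (m b) (τ K A A (Δ a)) + lTensor A (m.flip a) (τ K A A (Δ b))
      + rTensor A (m.flip b) (Δ a) + lTensor A (m a) (Δ b)) ∧
  (∀ a b, ω K A (lTensor A (m.flip b) (Δ a) - rTensor A (m b) (Δ a)
      - lTensor A (m.flip a) (Δ b) + rTensor A (m a) (Δ b)) = 0)

/-- `V` is a bimodule over the anti-flexible algebra `(H, m)` via `tr = ▷` and `tl = ◁`. -/
def IsAFBimodule (m : H →ₗ[K] H →ₗ[K] H)
    (tr : H →ₗ[K] V →ₗ[K] V) (tl : V →ₗ[K] H →ₗ[K] V) : Prop :=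
  (∀ x y v, tr (m x y) v - tr x (tr y v) = tl (tl v y) x - tl v (m y x)) ∧
  (∀ x y v, tl (tr x v) y - tr x (tl v y) = tl (tr y v) x - tr y (tl v x))

/-- `V` is a bicomodule over the anti-flexible coalgebra `(H, Δ)` via `φ` and `ψ`. -/
def IsAFBicomodule (Δ : H →ₗ[K] H ⊗[K] H)
    (φ : V →ₗ[K] H ⊗[K] V) (ψ : V →ₗ[K] V ⊗[K] H) : Prop :=
  (∀ v, rTensor V Δ (φ v) - α K H H V (lTensor H φ (φ v))
      = τ₁₃ K V H H (rTensor H ψ (ψ v) - α K V H H (lTensor V Δ (ψ v)))) ∧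
  (∀ v, rTensor H φ (ψ v) - α K H V H (lTensor H ψ (φ v))
      = τ₁₃ K H V H (rTensor H φ (ψ v) - α K H V H (lTensor H ψ (φ v))))

/-- Anti-flexible Hopf bimodule over `(H, m, Δ)`, with conditions (HM1)-(HM3). -/
def IsAFHopfBimodule (m : H →ₗ[K] H →ₗ[K] H) (Δ : H →ₗ[K] H ⊗[K] H)
    (tr : H →ₗ[K] V →ₗ[K] V) (tl : V →ₗ[K] H →ₗ[K] V)
    (φ : V →ₗ[K] H ⊗[K] V) (ψ : V →ₗ[K] V ⊗[K] H) : Prop :=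
  IsAFBimodule m tr tl ∧ IsAFBicomodule Δ φ ψ ∧
  -- (HM1)
  (∀ x v, φ (tr x v) + τ K V H (ψ (tl v x))
      = lTensor H (tr x) (φ v) + lTensor H (tl.flip x) (τ K V H (ψ v))) ∧
  -- (HM2)
  (∀ x v, ψ (tr x v) + τ K H V (φ (tl v x))
      = rTensor H (tr.flip v) (Δ x) + lTensor V (m x) (ψ v)
      + lTensor V (m.flip x) (τ K H V (φ v)) + rTensor H (tl v) (τ K H H (Δ x))) ∧
  -- (HM3)
  (∀ x v, rTensor H (tr x) (ψ v) - rTensor H (tl v) (Δ x) - lTensor V (m.flip x) (ψ v)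
      = τ K H V (- lTensor H (tl.flip x) (φ v) + rTensor V (m x) (φ v)
        + lTensor H (tr.flip v) (Δ x)))

/-- `A` is a braided anti-flexible bialgebra over `(H, mH, ΔH)`:
an anti-flexible algebra and coalgebra in the category of anti-flexible Hopf bimodules,
satisfying (BB1) and (BB2). -/
def IsBraidedAFBialgebra (mA : A →ₗ[K] A →ₗ[K] A) (ΔA : A →ₗ[K] A ⊗[K] A)
    (mH : H →ₗ[K] H →ₗ[K] H) (ΔH : H →ₗ[K] H ⊗[K] H)
    (tr : H →ₗ[K] A →ₗ[K] A) (tl : A →ₗ[K] H →ₗ[K] A)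
    (φ : A →ₗ[K] H ⊗[K] A) (ψ : A →ₗ[K] A ⊗[K] H) : Prop :=
  IsAFAlgebra mA ∧ IsAFCoalgebra ΔA ∧
  IsAFHopfBimodule mH ΔH tr tl φ ψ ∧
  -- H-bimodule algebra
  (∀ x a b, mA (tr x a) b - tr x (mA a b) = tl (mA b a) x - mA b (tl a x)) ∧
  (∀ x a b, mA a (tr x b) - mA (tl a x) b = mA b (tr x a) - mA (tl b x) a) ∧
  -- H-bimodule coalgebra
  (∀ x b, ΔA (tr x b) + τ K A A (ΔA (tl b x))
      = lTensor A (tl.flip x) (τ K A A (ΔA b)) + lTensor A (tr x) (ΔA b)) ∧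
  (∀ x b, ω K A (rTensor A (tr x) (ΔA b) - lTensor A (tl.flip x) (ΔA b)) = 0) ∧
  -- H-bicomodule algebra
  (∀ a b, φ (mA a b) + τ K A H (ψ (mA b a))
      = lTensor H (mA a) (φ b) + lTensor H (mA.flip a) (τ K A H (ψ b))) ∧
  (∀ a b, lTensor H (mA.flip b) (φ a) - lTensor H (mA.flip a) (φ b)
      = τ K A H (rTensor H (mA a) (ψ b) - rTensor H (mA b) (ψ a))) ∧
  -- H-bicomodule coalgebra
  (∀ a, rTensor A φ (ΔA a) - α K H A A (lTensor H ΔA (φ a))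
      = τ₁₃ K A A H (rTensor H ΔA (ψ a) - α K A A H (lTensor A ψ (ΔA a)))) ∧
  (∀ a, rTensor A ψ (ΔA a) - α K A H A (lTensor A φ (ΔA a))
      = τ₁₃ K A H A (rTensor A ψ (ΔA a) - α K A H A (lTensor A φ (ΔA a)))) ∧
  -- (BB1)
  (∀ a b, ΔA (mA a b) + τ K A A (ΔA (mA b a))
      = rTensor A (mA.flip b) (ΔA a) + rTensor A (mA b) (τ K A A (ΔA a))
      + lTensor A (mA a) (ΔA b) + lTensor A (mA.flip a) (τ K A A (ΔA b))
      + rTensor A (tr.flip b) (φ a) + rTensor A (tl b) (τ K A H (ψ a))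
      + lTensor A (tl a) (ψ b) + lTensor A (tr.flip a) (τ K H A (φ b))) ∧
  -- (BB2)
  (∀ a b, ω K A (lTensor A (mA.flip b) (ΔA a) - rTensor A (mA b) (ΔA a)
        - lTensor A (mA.flip a) (ΔA b) + rTensor A (mA a) (ΔA b))
      + ω K A (lTensor A (tr.flip b) (ψ a) - rTensor A (tl b) (φ a)
        - lTensor A (tr.flip a) (ψ b) + rTensor A (tl a) (φ b)) = 0)

/-- The (cocycle) cross product multiplication on `A × H`:
`(a,x)(b,y) = (ab + x⇀b + a↼y + σ(x,y), xy + x◁b + a▷y + θ(a,b))`,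
where `tr = ⇀`, `tl = ↼`, `sr = ▷`, `sl = ◁`. -/
noncomputable def prodMul (mA : A →ₗ[K] A →ₗ[K] A) (mH : H →ₗ[K] H →ₗ[K] H)
    (tr : H →ₗ[K] A →ₗ[K] A) (tl : A →ₗ[K] H →ₗ[K] A)
    (sr : A →ₗ[K] H →ₗ[K] H) (sl : H →ₗ[K] A →ₗ[K] H)
    (σ : H →ₗ[K] H →ₗ[K] A) (θ : A →ₗ[K] A →ₗ[K] H) :
    (A × H) →ₗ[K] (A × H) →ₗ[K] (A × H) :=
  ((mA ∘ₗ fst K A H).compl₂ (fst K A H) + (tr ∘ₗ snd K A H).compl₂ (fst K A H)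
    + (tl ∘ₗ fst K A H).compl₂ (snd K A H)
    + (σ ∘ₗ snd K A H).compl₂ (snd K A H)).compr₂ (inl K A H)
  + ((mH ∘ₗ snd K A H).compl₂ (snd K A H) + (sl ∘ₗ snd K A H).compl₂ (fst K A H)
    + (sr ∘ₗ fst K A H).compl₂ (snd K A H)
    + (θ ∘ₗ fst K A H).compl₂ (fst K A H)).compr₂ (inr K A H)

/-- The (cycle) cross coproduct comultiplication on `A × H`:
`Δ(a) = Δ_A(a) + φ(a) + ψ(a) + P(a)` and `Δ(x) = Δ_H(x) + ρ(x) + γ(x) + Q(x)`. -/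
noncomputable def prodComul (ΔA : A →ₗ[K] A ⊗[K] A) (ΔH : H →ₗ[K] H ⊗[K] H)
    (φ : A →ₗ[K] H ⊗[K] A) (ψ : A →ₗ[K] A ⊗[K] H)
    (ρ : H →ₗ[K] A ⊗[K] H) (γ : H →ₗ[K] H ⊗[K] A)
    (P : A →ₗ[K] H ⊗[K] H) (Q : H →ₗ[K] A ⊗[K] A) :
    (A × H) →ₗ[K] (A × H) ⊗[K] (A × H) :=
  (TensorProduct.map (inl K A H) (inl K A H)) ∘ₗ ΔA ∘ₗ fst K A H
  + (TensorProduct.map (inr K A H) (inl K A H)) ∘ₗ φ ∘ₗ fst K A H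
  + (TensorProduct.map (inl K A H) (inr K A H)) ∘ₗ ψ ∘ₗ fst K A H
  + (TensorProduct.map (inr K A H) (inr K A H)) ∘ₗ P ∘ₗ fst K A H
  + (TensorProduct.map (inr K A H) (inr K A H)) ∘ₗ ΔH ∘ₗ snd K A H
  + (TensorProduct.map (inl K A H) (inr K A H)) ∘ₗ ρ ∘ₗ snd K A H
  + (TensorProduct.map (inr K A H) (inl K A H)) ∘ₗ γ ∘ₗ snd K A H
  + (TensorProduct.map (inl K A H) (inl K A H)) ∘ₗ Q ∘ₗ snd K A H

/-- The linear map `(a, x) ↦ (a + r(x), s(x))` on `A × V`. -/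
noncomputable def phiRS (r : V →ₗ[K] A) (s : V →ₗ[K] V) : (A × V) →ₗ[K] (A × V) :=
  (fst K A V + r ∘ₗ snd K A V).prod (s ∘ₗ snd K A V)

end Structures

end AntiFlexible

open AntiFlexible

section Stmt16

variable {K A : Type*} (V : Type*) [Field K] [CharZero K]
variable [AddCommGroup A] [Module K A] [AddCommGroup V] [Module K V]

/-- The comultiplication on `A × V` obtained from a raw type (c1) datum
`d = (φ, ψ, ρ, γ, P, Δ_V)`. -/
noncomputable def comulOfC1 (ΔA : A →ₗ[K] A ⊗[K] A)
    (d : (A →ₗ[K] V ⊗[K] A) × (A →ₗ[K] A ⊗[K] V) × (V →ₗ[K] A ⊗[K] V)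
      × (V →ₗ[K] V ⊗[K] A) × (A →ₗ[K] V ⊗[K] V) × (V →ₗ[K] V ⊗[K] V)) :
    (A × V) →ₗ[K] (A × V) ⊗[K] (A × V) :=
  prodComul ΔA d.2.2.2.2.2 d.1 d.2.1 d.2.2.1 d.2.2.2.1 d.2.2.2.2.1 0

/-- The comultiplication on `A × V` obtained from a raw type (c2) datum
`d = (ρ, γ, Q, Δ_V)`. -/
noncomputable def comulOfC2 (ΔA : A →ₗ[K] A ⊗[K] A)
    (d : (V →ₗ[K] A ⊗[K] V) × (V →ₗ[K] V ⊗[K] A) × (V →ₗ[K] A ⊗[K] A)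
      × (V →ₗ[K] V ⊗[K] V)) :
    (A × V) →ₗ[K] (A × V) ⊗[K] (A × V) :=
  prodComul ΔA d.2.2.2 0 0 d.1 d.2.1 0 d.2.2.1

/-- The disjoint union of type (c1) and type (c2) coalgebraic extending data. -/
def CoExtDatum (ΔA : A →ₗ[K] A ⊗[K] A) : Type _ :=
  {d : (A →ₗ[K] V ⊗[K] A) × (A →ₗ[K] A ⊗[K] V) × (V →ₗ[K] A ⊗[K] V)
      × (V →ₗ[K] V ⊗[K] A) × (A →ₗ[K] V ⊗[K] V) × (V →ₗ[K] V ⊗[K] V) //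
    IsAFCoalgebra (comulOfC1 V ΔA d)} ⊕
  {d : (V →ₗ[K] A ⊗[K] V) × (V →ₗ[K] V ⊗[K] A) × (V →ₗ[K] A ⊗[K] A)
      × (V →ₗ[K] V ⊗[K] V) // IsAFCoalgebra (comulOfC2 V ΔA d)}

/-- The unified coproduct associated to a coalgebraic extending datum. -/
noncomputable def toComul (ΔA : A →ₗ[K] A ⊗[K] A) :
    CoExtDatum V ΔA → ((A × V) →ₗ[K] (A × V) ⊗[K] (A × V)) :=
  Sum.elim (fun d => comulOfC1 V ΔA d.1) (fun d => comulOfC2 V ΔA d.1)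

/-- Equivalence of coalgebraic extending data: the corresponding unified
coproducts are isomorphic via `(a,x) ↦ (a + r(x), s(x))` with `s` bijective. -/
def CoDatumRel (ΔA : A →ₗ[K] A ⊗[K] A) (D D' : CoExtDatum V ΔA) : Prop :=
  ∃ (r : V →ₗ[K] A) (s : V →ₗ[K] V), Function.Bijective s ∧
    ∀ q : A × V,
      toComul V ΔA D' (phiRS r s q)
        = TensorProduct.map (phiRS r s) (phiRS r s) (toComul V ΔA D q)

/-- An anti-flexible coalgebra structure on `E = A × V` such that the canonical
injection or the canonical projection is a coalgebra homomorphism. -/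
def GoodComul (ΔA : A →ₗ[K] A ⊗[K] A)
    (Δ : (A × V) →ₗ[K] (A × V) ⊗[K] (A × V)) : Prop :=
  IsAFCoalgebra Δ ∧
    ((∀ a : A, Δ (a, 0)
        = TensorProduct.map (inl K A V) (inl K A V) (ΔA a)) ∨
     (∀ q : A × V,
        TensorProduct.map (fst K A V) (fst K A V) (Δ q) = ΔA q.1))

/-- Equivalence of coalgebra structures on `E`: isomorphic by a coalgebra
isomorphism stabilizing `A`. -/
def CoStructRel (ΔA : A →ₗ[K] A ⊗[K] A)
    (Δ Δ' : {Δ : (A × V) →ₗ[K] (A × V) ⊗[K] (A × V) // GoodComul V ΔA Δ}) : Prop :=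
  ∃ e : (A × V) ≃ₗ[K] (A × V),
    (∀ q : A × V, Δ'.1 (e q)
        = TensorProduct.map e.toLinearMap e.toLinearMap (Δ.1 q)) ∧
    (∀ a : A, e (a, 0) = ((a, 0) : A × V))


section Aux

variable {K A : Type*} {V : Type*} [Field K] [CharZero K]
variable [AddCommGroup A] [Module K A] [AddCommGroup V] [Module K V]

private lemma tmapmap {M₁ N₁ M₂ N₂ M₃ N₃ : Type*}
    [AddCommGroup M₁] [Module K M₁] [AddCommGroup N₁] [Module K N₁]
    [AddCommGroup M₂] [Module K M₂] [AddCommGroup N₂] [Module K N₂]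
    [AddCommGroup M₃] [Module K M₃] [AddCommGroup N₃] [Module K N₃]
    (f₂ : M₂ →ₗ[K] M₃) (g₂ : N₂ →ₗ[K] N₃) (f₁ : M₁ →ₗ[K] M₂) (g₁ : N₁ →ₗ[K] N₂)
    (t : M₁ ⊗[K] N₁) :
    TensorProduct.map f₂ g₂ (TensorProduct.map f₁ g₁ t)
      = TensorProduct.map (f₂ ∘ₗ f₁) (g₂ ∘ₗ g₁) t := by
  rw [TensorProduct.map_comp]; rfl

private lemma decomp (t : (A × V) ⊗[K] (A × V)) :
    TensorProduct.map (inl K A V ∘ₗ fst K A V) (inl K A V ∘ₗ fst K A V) t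
      + TensorProduct.map (inl K A V ∘ₗ fst K A V) (inr K A V ∘ₗ snd K A V) t
      + TensorProduct.map (inr K A V ∘ₗ snd K A V) (inl K A V ∘ₗ fst K A V) t
      + TensorProduct.map (inr K A V ∘ₗ snd K A V) (inr K A V ∘ₗ snd K A V) t = t := by
  have h : inl K A V ∘ₗ fst K A V + inr K A V ∘ₗ snd K A V
      = (LinearMap.id : A × V →ₗ[K] A × V) := by
    apply LinearMap.ext; intro q
    simp
  conv_rhs => rw [← LinearMap.id_apply (R := K) t, ← TensorProduct.map_id, ← h,
    TensorProduct.map_add_left, TensorProduct.map_add_right, TensorProduct.map_add_right]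
  simp only [LinearMap.add_apply]
  abel

private lemma recon (Δ : (A × V) →ₗ[K] (A × V) ⊗[K] (A × V)) :
    prodComul (TensorProduct.map (fst K A V) (fst K A V) ∘ₗ Δ ∘ₗ inl K A V)
      (TensorProduct.map (snd K A V) (snd K A V) ∘ₗ Δ ∘ₗ inr K A V)
      (TensorProduct.map (snd K A V) (fst K A V) ∘ₗ Δ ∘ₗ inl K A V)
      (TensorProduct.map (fst K A V) (snd K A V) ∘ₗ Δ ∘ₗ inl K A V)
      (TensorProduct.map (fst K A V) (snd K A V) ∘ₗ Δ ∘ₗ inr K A V)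
      (TensorProduct.map (snd K A V) (fst K A V) ∘ₗ Δ ∘ₗ inr K A V)
      (TensorProduct.map (snd K A V) (snd K A V) ∘ₗ Δ ∘ₗ inl K A V)
      (TensorProduct.map (fst K A V) (fst K A V) ∘ₗ Δ ∘ₗ inr K A V) = Δ := by
  apply LinearMap.ext; intro q
  have hq : Δ q = Δ (q.1, 0) + Δ (0, q.2) := by
    rw [← map_add]
    congr 1
    simp
  simp only [prodComul, LinearMap.add_apply, LinearMap.comp_apply, fst_apply, snd_apply,
    inl_apply, inr_apply, tmapmap]
  conv_rhs => rw [hq, ← decomp (Δ (q.1, 0)), ← decomp (Δ (0, q.2))]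
  abel

private lemma comulOfC1_eq (ΔA : A →ₗ[K] A ⊗[K] A)
    (Δ : (A × V) →ₗ[K] (A × V) ⊗[K] (A × V))
    (h : ∀ q : A × V, TensorProduct.map (fst K A V) (fst K A V) (Δ q) = ΔA q.1) :
    comulOfC1 V ΔA
      (TensorProduct.map (snd K A V) (fst K A V) ∘ₗ Δ ∘ₗ inl K A V,
       TensorProduct.map (fst K A V) (snd K A V) ∘ₗ Δ ∘ₗ inl K A V,
       TensorProduct.map (fst K A V) (snd K A V) ∘ₗ Δ ∘ₗ inr K A V,
       TensorProduct.map (snd K A V) (fst K A V) ∘ₗ Δ ∘ₗ inr K A V,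
       TensorProduct.map (snd K A V) (snd K A V) ∘ₗ Δ ∘ₗ inl K A V,
       TensorProduct.map (snd K A V) (snd K A V) ∘ₗ Δ ∘ₗ inr K A V) = Δ := by
  have h1 : TensorProduct.map (fst K A V) (fst K A V) ∘ₗ Δ ∘ₗ inl K A V = ΔA := by
    apply LinearMap.ext; intro a
    simpa using h (a, 0)
  have h2 : TensorProduct.map (fst K A V) (fst K A V) ∘ₗ Δ ∘ₗ inr K A V = 0 := by
    apply LinearMap.ext; intro x
    simpa using h (0, x)
  have hr := recon Δ
  rw [h1, h2] at hr
  exact hr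

private lemma comulOfC2_eq (ΔA : A →ₗ[K] A ⊗[K] A)
    (Δ : (A × V) →ₗ[K] (A × V) ⊗[K] (A × V))
    (h : ∀ a : A, Δ (a, 0) = TensorProduct.map (inl K A V) (inl K A V) (ΔA a)) :
    comulOfC2 V ΔA
      (TensorProduct.map (fst K A V) (snd K A V) ∘ₗ Δ ∘ₗ inr K A V,
       TensorProduct.map (snd K A V) (fst K A V) ∘ₗ Δ ∘ₗ inr K A V,
       TensorProduct.map (fst K A V) (fst K A V) ∘ₗ Δ ∘ₗ inr K A V,
       TensorProduct.map (snd K A V) (snd K A V) ∘ₗ Δ ∘ₗ inr K A V) = Δ := by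
  have h1 : TensorProduct.map (fst K A V) (fst K A V) ∘ₗ Δ ∘ₗ inl K A V = ΔA := by
    apply LinearMap.ext; intro a
    simp [h a, tmapmap]
  have hφ : TensorProduct.map (snd K A V) (fst K A V) ∘ₗ Δ ∘ₗ inl K A V = 0 := by
    apply LinearMap.ext; intro a
    simp [h a, tmapmap, TensorProduct.map_zero_left]
  have hψ : TensorProduct.map (fst K A V) (snd K A V) ∘ₗ Δ ∘ₗ inl K A V = 0 := by
    apply LinearMap.ext; intro a
    simp [h a, tmapmap, TensorProduct.map_zero_right]
  have hP : TensorProduct.map (snd K A V) (snd K A V) ∘ₗ Δ ∘ₗ inl K A V = 0 := by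
    apply LinearMap.ext; intro a
    simp [h a, tmapmap, TensorProduct.map_zero_left]
  have hr := recon Δ
  rw [h1, hφ, hψ, hP] at hr
  exact hr

private lemma good_toComul (ΔA : A →ₗ[K] A ⊗[K] A) (D : CoExtDatum V ΔA) :
    GoodComul V ΔA (toComul V ΔA D) := by
  cases D with
  | inl d =>
    refine ⟨d.2, Or.inr fun q => ?_⟩
    show TensorProduct.map (fst K A V) (fst K A V) (comulOfC1 V ΔA d.1 q) = ΔA q.1
    simp [comulOfC1, prodComul, tmapmap, TensorProduct.map_zero_left,
      TensorProduct.map_zero_right, TensorProduct.map_id]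
  | inr d =>
    refine ⟨d.2, Or.inl fun a => ?_⟩
    show comulOfC2 V ΔA d.1 (a, 0) = TensorProduct.map (inl K A V) (inl K A V) (ΔA a)
    simp [comulOfC2, prodComul]

private lemma phiRS_apply' (r : V →ₗ[K] A) (s : V →ₗ[K] V) (q : A × V) :
    phiRS r s q = (q.1 + r q.2, s q.2) := rfl

private lemma phiRS_bijective (r : V →ₗ[K] A) {s : V →ₗ[K] V}
    (hs : Function.Bijective s) : Function.Bijective (phiRS r s) := by
  constructor
  · intro q q' h
    rw [phiRS_apply', phiRS_apply', Prod.mk.injEq] at h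
    have h2 : q.2 = q'.2 := hs.1 h.2
    have h1 : q.1 = q'.1 := by
      have := h.1
      rw [h2] at this
      exact add_right_cancel this
    exact Prod.ext h1 h2
  · intro p
    obtain ⟨x, hx⟩ := hs.2 p.2
    exact ⟨(p.1 - r x, x), by rw [phiRS_apply']; simp [hx]⟩

private lemma symm_comp_eq_id (e : (A × V) ≃ₗ[K] (A × V)) :
    e.symm.toLinearMap ∘ₗ e.toLinearMap = LinearMap.id := by
  apply LinearMap.ext; intro q; simp

private lemma costruct_equivalence (ΔA : A →ₗ[K] A ⊗[K] A) :
    Equivalence (CoStructRel V ΔA) := by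
  constructor
  · intro Δ
    refine ⟨LinearEquiv.refl K (A × V), fun q => ?_, fun a => rfl⟩
    show Δ.1 q = TensorProduct.map LinearMap.id LinearMap.id (Δ.1 q)
    rw [TensorProduct.map_id, LinearMap.id_apply]
  · rintro Δ Δ' ⟨e, hc, hf⟩
    refine ⟨e.symm, fun q => ?_, fun a => ?_⟩
    · have h := hc (e.symm q)
      rw [e.apply_symm_apply] at h
      rw [h, tmapmap, symm_comp_eq_id, TensorProduct.map_id, LinearMap.id_apply]
    · apply e.injective
      rw [e.apply_symm_apply, hf a]
  · rintro Δ Δ' Δ'' ⟨e₁, hc₁, hf₁⟩ ⟨e₂, hc₂, hf₂⟩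
    refine ⟨e₁ ≪≫ₗ e₂, fun q => ?_, fun a => ?_⟩
    · show Δ''.1 (e₂ (e₁ q)) = TensorProduct.map (e₁ ≪≫ₗ e₂).toLinearMap
        (e₁ ≪≫ₗ e₂).toLinearMap (Δ.1 q)
      rw [hc₂, hc₁, tmapmap]
      rfl
    · show e₂ (e₁ (a, 0)) = ((a, 0) : A × V)
      rw [hf₁, hf₂]

private lemma codatum_to_costruct (ΔA : A →ₗ[K] A ⊗[K] A) {D D' : CoExtDatum V ΔA}
    (h : CoDatumRel V ΔA D D') :
    CoStructRel V ΔA ⟨toComul V ΔA D, good_toComul ΔA D⟩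
      ⟨toComul V ΔA D', good_toComul ΔA D'⟩ := by
  obtain ⟨r, s, hs, hcomm⟩ := h
  refine ⟨LinearEquiv.ofBijective (phiRS r s) (phiRS_bijective r hs),
    fun q => hcomm q, fun a => ?_⟩
  show phiRS r s (a, 0) = ((a, 0) : A × V)
  rw [phiRS_apply']
  simp

private lemma costruct_to_codatum (ΔA : A →ₗ[K] A ⊗[K] A) {D D' : CoExtDatum V ΔA}
    (h : CoStructRel V ΔA ⟨toComul V ΔA D, good_toComul ΔA D⟩
      ⟨toComul V ΔA D', good_toComul ΔA D'⟩) :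
    CoDatumRel V ΔA D D' := by
  obtain ⟨e, hc, hf⟩ := h
  set r : V →ₗ[K] A := fst K A V ∘ₗ e.toLinearMap ∘ₗ inr K A V with hr
  set s : V →ₗ[K] V := snd K A V ∘ₗ e.toLinearMap ∘ₗ inr K A V with hsdef
  have he : (e.toLinearMap : (A × V) →ₗ[K] A × V) = phiRS r s := by
    apply LinearMap.ext; intro q
    have hq : (q : A × V) = ((q.1, 0) : A × V) + (0, q.2) := by simp
    have h1 : e.toLinearMap q = e (q.1, 0) + e (0, q.2) := by
      conv_lhs => rw [hq]
      exact map_add _ _ _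
    have h2 : e (0, q.2) = ((r q.2, s q.2) : A × V) := rfl
    rw [h1, hf q.1, h2, phiRS_apply']
    simp
  have heq : ∀ q : A × V, e q = (q.1 + r q.2, s q.2) := by
    intro q
    have := congrArg (fun f : (A × V) →ₗ[K] A × V => f q) he
    simpa [phiRS_apply'] using this
  have hsinj : Function.Injective s := by
    intro x y hxy
    have h1 : e (r y, x) = e (r x, y) := by
      rw [heq, heq]
      exact Prod.ext (by simp [add_comm]) hxy
    have := e.injective h1
    exact congrArg Prod.snd this
  have hssurj : Function.Surjective s := by
    intro v
    obtain ⟨q, hqv⟩ := e.surjective (0, v)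
    refine ⟨q.2, ?_⟩
    have := heq q
    rw [hqv] at this
    exact (congrArg Prod.snd this).symm
  refine ⟨r, s, ⟨hsinj, hssurj⟩, fun q => ?_⟩
  rw [← he]
  exact hc q

end Aux

/-- the map sending (the class of) a coalgebraic extending datum
to (the class of) its unified coproduct is a well-defined bijection
`HC(V,A) ≅ CExtd(E,A)`. -/
theorem extending_problem_coalgebra_classification
    (ΔA : A →ₗ[K] A ⊗[K] A) (hA : IsAFCoalgebra ΔA) :
    ∃ Ψ : Quot (CoDatumRel V ΔA) → Quot (CoStructRel V ΔA),
      Function.Bijective Ψ ∧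
      ∀ (D : CoExtDatum V ΔA) (h : GoodComul V ΔA (toComul V ΔA D)),
        Ψ (Quot.mk _ D) = Quot.mk _ ⟨toComul V ΔA D, h⟩ := by
  refine ⟨Quot.lift
      (fun D => Quot.mk (CoStructRel V ΔA) ⟨toComul V ΔA D, good_toComul ΔA D⟩)
      (fun D D' h => Quot.sound (codatum_to_costruct ΔA h)), ⟨?_, ?_⟩, fun D h => rfl⟩
  · -- injective
    intro x y
    induction x using Quot.ind with | _ D => ?_
    induction y using Quot.ind with | _ D' => ?_
    intro h
    have h' : CoStructRel V ΔA ⟨toComul V ΔA D, good_toComul ΔA D⟩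
        ⟨toComul V ΔA D', good_toComul ΔA D'⟩ :=
      ((costruct_equivalence ΔA).eqvGen_iff).mp (Quot.eq.mp h)
    exact Quot.sound (costruct_to_codatum ΔA h')
  · -- surjective
    intro y
    induction y using Quot.ind with | _ S => ?_
    obtain ⟨Δ, haf, hgood⟩ := S
    cases hgood with
    | inl hinj =>
      -- type (c2): the injection is a coalgebra map
      set d : (V →ₗ[K] A ⊗[K] V) × (V →ₗ[K] V ⊗[K] A) × (V →ₗ[K] A ⊗[K] A)
          × (V →ₗ[K] V ⊗[K] V) :=
        (TensorProduct.map (fst K A V) (snd K A V) ∘ₗ Δ ∘ₗ inr K A V,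
         TensorProduct.map (snd K A V) (fst K A V) ∘ₗ Δ ∘ₗ inr K A V,
         TensorProduct.map (fst K A V) (fst K A V) ∘ₗ Δ ∘ₗ inr K A V,
         TensorProduct.map (snd K A V) (snd K A V) ∘ₗ Δ ∘ₗ inr K A V) with hd
      have hceq : comulOfC2 V ΔA d = Δ := comulOfC2_eq ΔA Δ hinj
      have hafd : IsAFCoalgebra (comulOfC2 V ΔA d) := by rw [hceq]; exact haf
      refine ⟨Quot.mk _ (Sum.inr ⟨d, hafd⟩), ?_⟩
      have hval : toComul V ΔA (Sum.inr ⟨d, hafd⟩) = Δ := hceq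
      exact congrArg (Quot.mk _) (Subtype.ext hval)
    | inr hproj =>
      -- type (c1): the projection is a coalgebra map
      set d : (A →ₗ[K] V ⊗[K] A) × (A →ₗ[K] A ⊗[K] V) × (V →ₗ[K] A ⊗[K] V)
          × (V →ₗ[K] V ⊗[K] A) × (A →ₗ[K] V ⊗[K] V) × (V →ₗ[K] V ⊗[K] V) :=
        (TensorProduct.map (snd K A V) (fst K A V) ∘ₗ Δ ∘ₗ inl K A V,
         TensorProduct.map (fst K A V) (snd K A V) ∘ₗ Δ ∘ₗ inl K A V,
         TensorProduct.map (fst K A V) (snd K A V) ∘ₗ Δ ∘ₗ inr K A V,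
         TensorProduct.map (snd K A V) (fst K A V) ∘ₗ Δ ∘ₗ inr K A V,
         TensorProduct.map (snd K A V) (snd K A V) ∘ₗ Δ ∘ₗ inl K A V,
         TensorProduct.map (snd K A V) (snd K A V) ∘ₗ Δ ∘ₗ inr K A V) with hd
      have hceq : comulOfC1 V ΔA d = Δ := comulOfC1_eq ΔA Δ hproj
      have hafd : IsAFCoalgebra (comulOfC1 V ΔA d) := by rw [hceq]; exact haf
      refine ⟨Quot.mk _ (Sum.inl ⟨d, hafd⟩), ?_⟩
      have hval : toComul V ΔA (Sum.inl ⟨d, hafd⟩) = Δ := hceq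
      exact congrArg (Quot.mk _) (Subtype.ext hval)

end Stmt16
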